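/- arXiv:1910.06226 — 2 statements merged into one kernel-verified Lean document; each statement's English description precedes it below -/
import Mathlib

section
/- Let T = a_1a_2...a_s be a square-free word over the alphabet {1,2,3}, and let V_1, V_2, V_3 be three pairwise disjoint alphabets. Then any word of the form W = W_1W_2...W_s, where each W_i is a nonempty word over the alphabet V_{a_i} whose letters are pairwise distinct, is square-free. -/
/-!
Colour each letter of `W` by the alphabet `V i` containing it. Collapsing runs of equal
colours (`List.destutter (· ≠ ·)`) sends the colour word of `W` back to `T`, because the blocks
are nonempty and adjacent letters of the square-free word `T` differ; and collapsing maps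
factors to factors. If `X X` is a square in `W` whose colour word `u` is not constant, the
collapse of `u u` begins with a nonempty square, which would then be a factor of `T`. If `u` is
constant, `X X` is a monochromatic factor of `W`, so it lies inside a single block `Wᵢ`; this
is impossible since the letters of `Wᵢ` are pairwise distinct.
-/

/-- A word (a list of letters) is square-free if it contains no nonempty
factor of the form `x ++ x`. -/
def SquareFree {α : Type*} (w : List α) : Prop :=
  ∀ x : List α, x ≠ [] → ¬ (x ++ x) <:+: w

namespace List

variable {β : Type*}

theorem exists_destutter'_eq_cons (R : β → β → Prop) [DecidableRel R] (a : β) (l : List β) :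
    ∃ t, l.destutter' R a = a :: t := by
  induction l generalizing a with
  | nil => exact ⟨[], rfl⟩
  | cons b l ih => rw [destutter'_cons]; split_ifs; exacts [⟨_, rfl⟩, ih a]

section DecidableEq

variable [DecidableEq β]

theorem destutter'_ne_append (a : β) (l₁ l₂ : List β) :
    (l₁ ++ l₂).destutter' (· ≠ ·) a =
      (l₁.destutter' (· ≠ ·) a).dropLast ++
        l₂.destutter' (· ≠ ·) ((a :: l₁).getLast (cons_ne_nil a l₁)) := by
  induction l₁ generalizing a with
  | nil => simp
  | cons b l₁ ih =>
    by_cases hab : a = b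
    · subst hab
      simp [ih]
    · rw [cons_append, destutter'_cons_pos _ hab, destutter'_cons_pos _ hab, ih,
        dropLast_cons_of_ne_nil (destutter'_ne_nil _ _), getLast_cons (cons_ne_nil _ _)]
      rfl

theorem destutter'_ne_eq_dropLast_append (a : β) (l : List β) :
    l.destutter' (· ≠ ·) a =
      (l.destutter' (· ≠ ·) a).dropLast ++ [(a :: l).getLast (cons_ne_nil a l)] := by
  simpa using destutter'_ne_append a l []

theorem destutter'_ne_prefix_append (a : β) (l₁ l₂ : List β) :
    l₁.destutter' (· ≠ ·) a <+: (l₁ ++ l₂).destutter' (· ≠ ·) a := by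
  obtain ⟨t, ht⟩ :=
    exists_destutter'_eq_cons (· ≠ ·) ((a :: l₁).getLast (cons_ne_nil a l₁)) l₂
  rw [destutter'_ne_append, ht, ← singleton_append, ← append_assoc,
    ← destutter'_ne_eq_dropLast_append]
  exact prefix_append _ _

theorem destutter'_ne_suffix_destutter_append (p l : List β) (a : β) :
    l.destutter' (· ≠ ·) a <:+ (p ++ a :: l).destutter (· ≠ ·) := by
  cases p with
  | nil => exact suffix_refl _
  | cons b p =>
    rw [cons_append, destutter_cons', destutter'_ne_append, destutter'_cons]
    split_ifs with h
    · exact (suffix_cons _ _).trans (suffix_append _ _)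
    · rw [not_not.1 h]
      exact suffix_append _ _

theorem IsInfix.destutter_ne {l₁ l₂ : List β} (h : l₁ <:+: l₂) :
    l₁.destutter (· ≠ ·) <:+: l₂.destutter (· ≠ ·) := by
  obtain ⟨p, s, rfl⟩ := h
  cases l₁ with
  | nil => exact nil_infix
  | cons a l =>
    rw [append_assoc, cons_append, destutter_cons']
    exact (destutter'_ne_prefix_append a l s).isInfix.trans
      (destutter'_ne_suffix_destutter_append p (l ++ s) a).isInfix

theorem mem_destutter'_ne {a x : β} {l : List β} (hx : x ∈ a :: l) :
    x ∈ l.destutter' (· ≠ ·) a := by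
  induction l generalizing a with
  | nil => simpa using hx
  | cons b l ih =>
    by_cases hab : a = b
    · subst hab
      rw [destutter'_cons_neg _ (not_not.2 rfl)]
      exact ih (by simpa using hx)
    · rw [destutter'_cons_pos _ hab]
      rcases mem_cons.1 hx with rfl | hx
      · exact mem_cons_self
      · exact mem_cons_of_mem _ (ih hx)

/-- With `E` the collapse of `u` and `F` the word `E` without its last letter, the collapse of
`u u` is `E E` or `F E = F F z`, according as the last letter `z` of `u` differs from its first
letter or not. -/
theorem destutter_ne_append_self {u : List β} (hu : u ≠ []) :
    (∃ F ≠ [], F ++ F <+: (u ++ u).destutter (· ≠ ·)) ∨ ∃ a, ∀ x ∈ u, x = a := by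
  obtain ⟨a, u, rfl⟩ := exists_cons_of_ne_nil hu
  set E := u.destutter' (· ≠ ·) a
  set F := E.dropLast
  set z := (a :: u).getLast (cons_ne_nil a u)
  have hE : E = F ++ [z] := destutter'_ne_eq_dropLast_append a u
  have hsq : (a :: u ++ a :: u).destutter (· ≠ ·) = F ++ (a :: u).destutter' (· ≠ ·) z := by
    rw [cons_append, destutter_cons', destutter'_ne_append]
  by_cases hza : z = a
  · rw [hza, destutter'_cons_neg _ (not_not.2 rfl)] at hsq
    by_cases hF : F = []
    · right
      refine ⟨a, fun x hx => ?_⟩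
      have hxE : x ∈ E := mem_destutter'_ne hx
      rwa [hE, hF, hza, nil_append, mem_singleton] at hxE
    · left
      refine ⟨F, hF, ?_⟩
      rw [hsq]
      change F ++ F <+: F ++ E
      rw [hE, ← append_assoc]
      exact prefix_append _ _
  · left
    refine ⟨E, destutter'_ne_nil _ _, ?_⟩
    rw [hsq, destutter'_cons_pos _ hza, ← singleton_append, ← append_assoc, ← hE]

theorem destutter'_ne_append_of_forall_eq {a : β} {l₁ : List β} (h : ∀ x ∈ l₁, x = a)
    (l₂ : List β) : (l₁ ++ l₂).destutter' (· ≠ ·) a = l₂.destutter' (· ≠ ·) a := by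
  induction l₁ with
  | nil => rfl
  | cons b l₁ ih =>
    obtain rfl := h b mem_cons_self
    rw [cons_append, destutter'_cons_neg _ (not_not.2 rfl)]
    exact ih fun x hx => h x (mem_cons_of_mem _ hx)

theorem destutter'_ne_flatten {a : β} {Bs : List (List β)} {T : List β}
    (hne : ∀ B ∈ Bs, B ≠ []) (hcol : Forall₂ (fun B t => ∀ x ∈ B, x = t) Bs T)
    (hT : IsChain (· ≠ ·) (a :: T)) : Bs.flatten.destutter' (· ≠ ·) a = a :: T := by
  induction hcol generalizing a with
  | nil => rfl
  | @cons B t Bs T hB _ ih =>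
    obtain ⟨b, B, rfl⟩ := exists_cons_of_ne_nil (hne _ mem_cons_self)
    obtain rfl := hB b mem_cons_self
    rw [isChain_cons_cons] at hT
    rw [flatten_cons, cons_append, destutter'_cons_pos _ hT.1,
      destutter'_ne_append_of_forall_eq (fun x hx => hB x (mem_cons_of_mem _ hx)),
      ih (fun B' hB' => hne B' (mem_cons_of_mem _ hB')) hT.2]

theorem destutter_ne_flatten {Bs : List (List β)} {T : List β}
    (hne : ∀ B ∈ Bs, B ≠ []) (hcol : Forall₂ (fun B t => ∀ x ∈ B, x = t) Bs T)
    (hT : IsChain (· ≠ ·) T) : Bs.flatten.destutter (· ≠ ·) = T := by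
  cases hcol with
  | nil => rfl
  | @cons B t Bs T hB hcol =>
    obtain ⟨b, B, rfl⟩ := exists_cons_of_ne_nil (hne _ mem_cons_self)
    obtain rfl := hB b mem_cons_self
    rw [flatten_cons, cons_append, destutter_cons',
      destutter'_ne_append_of_forall_eq (fun x hx => hB x (mem_cons_of_mem _ hx)),
      destutter'_ne_flatten (fun B' hB' => hne B' (mem_cons_of_mem _ hB')) hcol hT]

end DecidableEq

theorem exists_mem_infix_of_infix_flatten {α : Type*} {c : α → β}
    {Ws : List (List α)} {T : List β} (hne : ∀ W ∈ Ws, W ≠ [])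
    (hcol : Forall₂ (fun W t => ∀ x ∈ W, c x = t) Ws T) (hT : IsChain (· ≠ ·) T)
    {u : List α} (hu : u <:+: Ws.flatten) (hu₀ : u ≠ []) {a : β}
    (hua : ∀ x ∈ u, c x = a) : ∃ W ∈ Ws, u <:+: W := by
  induction hcol generalizing u with
  | nil => exact absurd (eq_nil_of_infix_nil hu) hu₀
  | @cons W t Ws T hW hcol ih =>
    have hne' : ∀ W' ∈ Ws, W' ≠ [] := fun W' h => hne W' (mem_cons_of_mem _ h)
    have ih' (hu' : u <:+: Ws.flatten) : ∃ W' ∈ W :: Ws, u <:+: W' :=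
      have ⟨W', hW', h⟩ := ih hne' hT.tail hu' hu₀ hua
      ⟨W', mem_cons_of_mem _ hW', h⟩
    rw [flatten_cons, infix_append_iff] at hu
    rcases hu with hu | hu | ⟨l₁, l₂, rfl, h₁, h₂⟩
    · exact ⟨W, mem_cons_self, hu⟩
    · exact ih' hu
    rcases l₁ with _ | ⟨y, l₁⟩
    · exact ih' h₂.isInfix
    rcases l₂ with _ | ⟨z, l₂⟩
    · exact ⟨W, mem_cons_self, by simpa using h₁.isInfix⟩
    exfalso
    cases hcol with
    | nil => simp at h₂
    | @cons W' t' Ws T hW' _ =>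
      obtain ⟨w, W', rfl⟩ := exists_cons_of_ne_nil (hne' _ mem_cons_self)
      have hzw : z = w := (cons_prefix_cons.1 h₂).1
      have hty : t = a := (hW y (h₁.subset mem_cons_self)).symm.trans (hua y (by simp))
      have htz : t' = a := (hW' w mem_cons_self).symm.trans (hzw ▸ hua z (by simp))
      exact (isChain_cons_cons.1 hT).1 (hty.trans htz.symm)

theorem Nodup.squareFree {α : Type*} {w : List α} (hw : w.Nodup) : SquareFree w := by
  intro x hx hxx
  obtain ⟨a, x, rfl⟩ := exists_cons_of_ne_nil hx
  have := hw.sublist hxx.sublist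
  simp [nodup_append] at this

end List

namespace SquareFree

open List

variable {α β : Type*}

theorem isChain_ne {w : List β} (hw : SquareFree w) : w.IsChain (· ≠ ·) :=
  isChain_iff_forall_rel_of_append_cons_cons.2 fun a b l₁ l₂ h hab =>
    hw [a] (cons_ne_nil _ _) ⟨l₁, l₂, by simp [h, hab]⟩

theorem flatten_of_forall₂_color (c : α → β) {T : List β} (hT : SquareFree T)
    {Ws : List (List α)} (hne : ∀ W ∈ Ws, W ≠ []) (hnd : ∀ W ∈ Ws, W.Nodup)
    (hcol : Forall₂ (fun W t => ∀ x ∈ W, c x = t) Ws T) :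
    SquareFree Ws.flatten := by
  classical
  intro X hX hXX
  have hchain := hT.isChain_ne
  have hcolors : (Ws.map (map c)).flatten.destutter (· ≠ ·) = T :=
    destutter_ne_flatten (by simpa using hne)
      (forall₂_map_left_iff.2 (hcol.imp fun _ _ h => by simpa using h)) hchain
  have hsq : (X.map c ++ X.map c).destutter (· ≠ ·) <:+: T := by
    rw [← hcolors, ← map_append, ← map_flatten]
    exact (hXX.map c).destutter_ne
  rcases destutter_ne_append_self (u := X.map c) (by simpa using hX)
    with ⟨F, hF, hFF⟩ | ⟨a, ha⟩
  · exact hT F hF (hFF.isInfix.trans hsq)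
  · obtain ⟨W, hW, hXXW⟩ :=
      exists_mem_infix_of_infix_flatten hne hcol hchain hXX (by simpa using hX)
        (by simpa using ha)
    exact (hnd W hW).squareFree X hX hXXW

end SquareFree

/-- If `T = a₁a₂…a_s` is a square-free word over the alphabet `{1,2,3}`
(represented by `Fin 3`) and `V 1, V 2, V 3` are pairwise disjoint
alphabets, then every word `W = W₁W₂…W_s`, where each `Wᵢ` is a nonempty
word over the alphabet `V aᵢ` with pairwise distinct letters, is
square-free. -/
theorem substitution_lemma {α : Type*} (V : Fin 3 → Set α)
    (hdisj : ∀ i j : Fin 3, i ≠ j → Disjoint (V i) (V j))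
    (T : List (Fin 3)) (hT : SquareFree T)
    (Ws : List (List α)) (hlen : Ws.length = T.length)
    (hW : ∀ (i : ℕ) (hi : i < T.length),
      Ws[i]'(by omega) ≠ [] ∧
      (∀ x ∈ Ws[i]'(by omega), x ∈ V (T[i]'hi)) ∧
      (Ws[i]'(by omega)).Nodup) :
    SquareFree Ws.flatten := by
  let color (x : α) : Fin 3 := Classical.epsilon (x ∈ V ·)
  have color_eq {x : α} {i : Fin 3} (hx : x ∈ V i) : color x = i := by
    by_contra h
    exact Set.disjoint_left.1 (hdisj _ _ h)
      (Classical.epsilon_spec (p := (x ∈ V ·)) ⟨i, hx⟩) hx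
  have hblock {W : List α} (hW' : W ∈ Ws) : W ≠ [] ∧ W.Nodup := by
    obtain ⟨i, hi, rfl⟩ := List.mem_iff_getElem.1 hW'
    exact ⟨(hW i (hlen ▸ hi)).1, (hW i (hlen ▸ hi)).2.2⟩
  exact hT.flatten_of_forall₂_color color (fun _ h => (hblock h).1) (fun _ h => (hblock h).2)
    (List.forall₂_iff_get.2 ⟨hlen, fun i _ h₂ x hx => color_eq ((hW i h₂).2.1 x hx)⟩)
end

section
/- The word H = abcabacbcabcbabcabacbcabc over the alphabet {a,b,c} is square-free and extremal: no word obtained from H by inserting a single letter of {a,b,c} at any position is square-free. -/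
/-- A square-free word is extremal if inserting a single letter at any
position never yields a square-free word. -/
def Extremal {α : Type*} (w : List α) : Prop :=
  SquareFree w ∧ ∀ (w' w'' : List α) (x : α), w = w' ++ w'' →
    ¬ SquareFree (w' ++ x :: w'')

/-- The letter `a` of the 3-letter alphabet. -/
def a : Fin 3 := 0
/-- The letter `b` of the 3-letter alphabet. -/
def b : Fin 3 := 1
/-- The letter `c` of the 3-letter alphabet. -/
def c : Fin 3 := 2

/-- The word `H = abcabacbcabcbabcabacbcabc`. -/
def H : List (Fin 3) :=
  [a, b, c, a, b, a, c, b, c, a, b, c, b, a, b, c, a, b, a, c, b, c, a, b, c]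

/-!
Both properties are finite checks. A square `x ++ x` occurs in `w` exactly when some suffix `t`
of `w` starts with it, and then `x` is itself a prefix of `t`; so square-freeness is decided by
a search over suffixes and their prefixes, and extremality by running that search on each of
the `3 * 26` one-letter insertions into `H`.
-/

theorem List.forall_eq_append_iff_forall_take_drop {α : Type*} (w : List α)
    (P : List α → List α → Prop) :
    (∀ u v, w = u ++ v → P u v) ↔ ∀ i ≤ w.length, P (w.take i) (w.drop i) := by
  constructor
  · intro h i _
    exact h _ _ (take_append_drop i w).symm
  · rintro h u v rfl
    simpa using h u.length (by simp)

section

variable {α : Type*}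

theorem squareFree_iff_forall_mem_tails {w : List α} :
    SquareFree w ↔ ∀ t ∈ w.tails, ∀ x ∈ t.inits, x ≠ [] → ¬ x ++ x <+: t := by
  simp only [SquareFree, List.mem_tails, List.mem_inits, List.infix_iff_prefix_suffix]
  constructor
  · intro h t ht x _ hx hp
    exact h x hx ⟨t, hp, ht⟩
  · rintro h x hx ⟨t, hp, ht⟩
    exact h t ht x ((List.prefix_append x x).trans hp) hx hp

instance [DecidableEq α] (w : List α) : Decidable (SquareFree w) :=
  decidable_of_iff _ squareFree_iff_forall_mem_tails.symm

theorem extremal_iff_forall_take_drop {w : List α} :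
    Extremal w ↔ SquareFree w ∧
      ∀ i ≤ w.length, ∀ x, ¬ SquareFree (w.take i ++ x :: w.drop i) := by
  refine and_congr_right fun _ => Iff.trans ?_ (w.forall_eq_append_iff_forall_take_drop
    fun u v => ∀ x, ¬ SquareFree (u ++ x :: v))
  exact ⟨fun h u v hw x => h u v x hw, fun h u v x hw => h u v hw x⟩

instance [DecidableEq α] [Fintype α] (w : List α) : Decidable (Extremal w) :=
  decidable_of_iff _ extremal_iff_forall_take_drop.symm

end

/-- The word `H` is square-free and extremal. -/
theorem H_extremal : SquareFree H ∧ Extremal H := by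
  -- the elaborator's `decide` times out on this search; the kernel evaluates it directly
  have h : Extremal H := by decide +kernel
  exact ⟨h.1, h⟩
end
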